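/- Let H be a bialgebra over a field K, C a right H-comodule coalgebra with coaction ρ(c) = Σ c₀ ⊗ c₁, and E a finite-dimensional subcoalgebra of C. Let D = H*·E be the right H-subcomodule of C generated by E under the induced left H*-action α·c = Σ α(c₁)c₀. Then D is finite-dimensional and is a subcoalgebra of C. -/

import Mathlib

/-!
Pick finite-dimensional `W ⊆ C` and `V ⊆ H` with `ρ(E) ⊆ W ⊗ H` and `ρ(E) ⊆ C ⊗ V`; then
`H^* · E ⊆ W`, so `D` is finite-dimensional. Since `V` is finite-dimensional, the functional
`(h, k) ↦ α(h k)` restricted to `V × H` is a finite sum `∑ⱼ γⱼ(h) δⱼ(k)`. For `c ∈ E` the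
comodule-coalgebra compatibility gives
`Δ(α · c) = ∑ α((c₍₁₎)₁ (c₍₂₎)₁) (c₍₁₎)₀ ⊗ (c₍₂₎)₀ = ∑ⱼ γⱼ · c₍₁₎ ⊗ δⱼ · c₍₂₎`,
and `c₍₁₎, c₍₂₎ ∈ E` because `E` is a subcoalgebra.
-/

open TensorProduct LinearMap

/-- `D` is a subcoalgebra of the `K`-coalgebra `C`. -/
def IsSubcoalgebra {K C : Type*} [CommSemiring K] [AddCommMonoid C] [Module K C]
    [Coalgebra K C] (D : Submodule K C) : Prop :=
  ∀ x ∈ D, Coalgebra.comul (R := K) x ∈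
    LinearMap.range (TensorProduct.map D.subtype D.subtype)

/-- The induced left `H^*`-action on a right `H`-comodule: `α · c = Σ α(c₁) c₀`. -/
noncomputable def dualAction {K H C : Type*} [Field K] [Ring H] [Algebra K H]
    [AddCommGroup C] [Module K C] (ρ : C →ₗ[K] C ⊗[K] H)
    (α : Module.Dual K H) (c : C) : C :=
  (TensorProduct.rid K C) ((LinearMap.lTensor C α) (ρ c))

lemma LinearMap.exists_eq_sum_mul_of_finiteDimensional {K M N : Type*} [Field K]
    [AddCommGroup M] [Module K M] [AddCommGroup N] [Module K N]
    (f : M →ₗ[K] N →ₗ[K] K) (V : Submodule K M) [FiniteDimensional K V] :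
    ∃ (n : ℕ) (γ : Fin n → Module.Dual K M) (δ : Fin n → Module.Dual K N),
      ∀ x ∈ V, ∀ y, f x y = ∑ j, γ j x * δ j y := by
  obtain ⟨p, hp⟩ := V.subtype.exists_leftInverse_of_injective V.ker_subtype
  let b := Module.finBasis K V
  refine ⟨_, fun i => b.coord i ∘ₗ p, fun i => f (b i), fun x hx y => ?_⟩
  have hpx : p x = ⟨x, hx⟩ := LinearMap.congr_fun hp ⟨x, hx⟩
  calc f x y = f (V.subtype ⟨x, hx⟩) y := rfl
    _ = _ := by
      rw [← b.sum_repr ⟨x, hx⟩, map_sum, map_sum, LinearMap.sum_apply]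
      simp [hpx]

section FiniteSupport

variable {K M N : Type*} [CommSemiring K] [AddCommMonoid M] [Module K M]
  [AddCommMonoid N] [Module K N] {F : Submodule K (M ⊗[K] N)}

lemma Submodule.FG.exists_finite_le_range_rTensor (hF : F.FG) :
    ∃ W : Submodule K M, Module.Finite K W ∧ F ≤ range (rTensor N W.subtype) := by
  obtain ⟨T, rfl⟩ := hF
  obtain ⟨W, hW, hT⟩ :=
    exists_finite_submodule_left_of_setFinite (T : Set (M ⊗[K] N)) T.finite_toSet
  exact ⟨W, hW, Submodule.span_le.2 hT⟩

lemma Submodule.FG.exists_finite_le_range_lTensor (hF : F.FG) :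
    ∃ V : Submodule K N, Module.Finite K V ∧ F ≤ range (lTensor M V.subtype) := by
  obtain ⟨T, rfl⟩ := hF
  obtain ⟨V, hV, hT⟩ :=
    exists_finite_submodule_right_of_setFinite (T : Set (M ⊗[K] N)) T.finite_toSet
  exact ⟨V, hV, Submodule.span_le.2 hT⟩

end FiniteSupport

section Slice

variable {K M N H : Type*} [CommSemiring K] [AddCommMonoid M] [Module K M]
  [AddCommMonoid N] [Module K N]

section AddCommMonoid

variable [AddCommMonoid H] [Module K H] (α : Module.Dual K H)

noncomputable def sliceRight : M ⊗[K] H →ₗ[K] M :=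
  TensorProduct.rid K M ∘ₗ lTensor M α

@[simp]
lemma sliceRight_tmul (m : M) (h : H) : sliceRight α (m ⊗ₜ[K] h) = α h • m := by
  simp [sliceRight]

lemma sliceRight_rTensor (f : M →ₗ[K] N) (t : M ⊗[K] H) :
    sliceRight α (rTensor H f t) = f (sliceRight α t) := by
  induction t using TensorProduct.induction_on with
  | zero => simp
  | tmul m h => simp
  | add s t hs ht => simp only [map_add, hs, ht]

lemma sliceRight_mem_range {f : M →ₗ[K] N} {t : N ⊗[K] H} (ht : t ∈ range (rTensor H f)) :
    sliceRight α t ∈ range f := by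
  obtain ⟨s, rfl⟩ := ht
  exact ⟨sliceRight α s, (sliceRight_rTensor α f s).symm⟩

end AddCommMonoid

lemma sliceRight_mul_tmul_eq_sum [Semiring H] [Algebra K H] {V : Submodule K H}
    {α : Module.Dual K H} {n : ℕ} {γ δ : Fin n → Module.Dual K H}
    (hα : ∀ h ∈ V, ∀ k, α (h * k) = ∑ j, γ j h * δ j k)
    {s : M ⊗[K] H} (hs : s ∈ range (lTensor M V.subtype)) (t : N ⊗[K] H) :
    sliceRight α (map LinearMap.id (mul' K H) (tensorTensorTensorComm K M H N H (s ⊗ₜ[K] t))) =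
      ∑ j, sliceRight (γ j) s ⊗ₜ[K] sliceRight (δ j) t := by
  obtain ⟨u, rfl⟩ := hs
  induction u using TensorProduct.induction_on with
  | zero => simp
  | add u u' hu hu' => simp only [map_add, add_tmul, hu, hu', ← Finset.sum_add_distrib]
  | tmul m h =>
    induction t using TensorProduct.induction_on with
    | zero => simp
    | add t t' ht ht' => simp only [map_add, tmul_add, ht, ht', ← Finset.sum_add_distrib]
    | tmul n k =>
      simp only [lTensor_tmul, Submodule.coe_subtype, tensorTensorTensorComm_tmul, map_tmul,
        id_coe, id_eq, mul'_apply, sliceRight_tmul, hα h h.2 k, Finset.sum_smul]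
      refine Finset.sum_congr rfl fun j _ => ?_
      rw [smul_tmul_smul, mul_comm]

end Slice

lemma dualAction_eq_sliceRight {K H C : Type*} [Field K] [Ring H] [Algebra K H]
    [AddCommGroup C] [Module K C] (ρ : C →ₗ[K] C ⊗[K] H) (α : Module.Dual K H) (c : C) :
    dualAction ρ α c = sliceRight α (ρ c) :=
  rfl

lemma isSubcoalgebra_span {K C : Type*} [CommSemiring K] [AddCommMonoid C] [Module K C]
    [Coalgebra K C] {s : Set C}
    (hs : ∀ x ∈ s, Coalgebra.comul (R := K) x ∈
      range (map (Submodule.span K s).subtype (Submodule.span K s).subtype)) :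
    IsSubcoalgebra (Submodule.span K s) := by
  have : Submodule.span K s ≤ (range (map (Submodule.span K s).subtype
      (Submodule.span K s).subtype)).comap (Coalgebra.comul (R := K)) :=
    Submodule.span_le.2 hs
  exact fun _ hx => this hx

theorem dualAction_span_isSubcoalgebra
    (K : Type*) [Field K] (H : Type*) [Ring H] [Bialgebra K H]
    (C : Type*) [AddCommGroup C] [Module K C] [Coalgebra K C]
    (ρ : C →ₗ[K] C ⊗[K] H)
    (hcompat : ∀ c : C,
        (TensorProduct.map LinearMap.id (LinearMap.mul' K H))
          ((TensorProduct.tensorTensorTensorComm K C H C H)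
            ((TensorProduct.map ρ ρ) (Coalgebra.comul (R := K) c))) =
        (LinearMap.rTensor H (Coalgebra.comul (R := K))) (ρ c))
    (E : Submodule K C) (hE : IsSubcoalgebra E) (hEfd : FiniteDimensional K E)
    (D : Submodule K C)
    (hD : D = Submodule.span K {x : C | ∃ (α : Module.Dual K H) (c : C),
        c ∈ E ∧ x = dualAction ρ α c}) :
    FiniteDimensional K D ∧ IsSubcoalgebra D := by
  subst hD
  have hρE : (E.map ρ).FG := ((Submodule.fg_iff_finiteDimensional E).2 hEfd).map ρ
  obtain ⟨W, _, hW⟩ := hρE.exists_finite_le_range_rTensor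
  obtain ⟨V, _, hV⟩ := hρE.exists_finite_le_range_lTensor
  refine ⟨?_, isSubcoalgebra_span ?_⟩
  · refine Submodule.finiteDimensional_of_le (Submodule.span_le.2 ?_ : _ ≤ W)
    rintro _ ⟨α, c, hc, rfl⟩
    rw [dualAction_eq_sliceRight]
    simpa using sliceRight_mem_range α (hW (Submodule.mem_map_of_mem hc))
  rintro _ ⟨α, c, hc, rfl⟩
  obtain ⟨n, γ, δ, hα⟩ := ((mul K H).compr₂ α).exists_eq_sum_mul_of_finiteDimensional V
  obtain ⟨y, hy⟩ := hE c hc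
  rw [dualAction_eq_sliceRight, ← sliceRight_rTensor, ← hcompat, ← hy]
  clear hy
  induction y using TensorProduct.induction_on with
  | zero => simp
  | add y y' hy hy' => simpa only [map_add] using add_mem hy hy'
  | tmul a b =>
    rw [map_tmul, map_tmul, Submodule.coe_subtype,
      sliceRight_mul_tmul_eq_sum (by simpa using hα) (hV (Submodule.mem_map_of_mem a.2))]
    refine Submodule.sum_mem _ fun j _ => ⟨⟨_, Submodule.subset_span ⟨γ j, a, a.2, rfl⟩⟩ ⊗ₜ
      ⟨_, Submodule.subset_span ⟨δ j, b, b.2, rfl⟩⟩, rfl⟩
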